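/- arXiv:2005.05108 — 3 statements merged into one kernel-verified Lean document; each statement's English description precedes it below -/
import Mathlib

section
/- Let G₁ and G₂ be finite acyclic graphs (in the AINOA formalism) and let M be a nodeless graph (a finite set of isolated edges) equipped with injections of M onto a subset of the out-boundary of G₁ and onto a subset of the in-boundary of G₂. Then the componentwise pushout G₁ ⊔_M G₂ (computed as pushouts of finite sets along injections on each of the components A, I, N, O) is again a graph, i.e. its outer maps are injective; moreover if the injections are bijections onto the full out-boundary of G₁ and full in-boundary of G₂, then the in-boundary of the pushout equals the in-boundary of G₁ and its out-boundary equals the out-boundary of G₂. -/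
/-- A whole-grain Petri net: a diagram of finite sets `S ← I → T ← O → S`. -/
structure PetriNet where
  S : Type
  I : Type
  T : Type
  O : Type
  [finS : Finite S]
  [finI : Finite I]
  [finT : Finite T]
  [finO : Finite O]
  sI : I → S
  tI : I → T
  tO : O → T
  sO : O → S

/-- A graph (AINOA style): a diagram of finite sets `A ← A_N → N ← _N A → A`
with the outer maps injective. -/
structure AinoaGraph where
  A : Type
  AN : Type
  N : Type
  NA : Type
  [finA : Finite A]
  [finAN : Finite AN]
  [finN : Finite N]
  [finNA : Finite NA]
  srcEdge : AN → A
  srcNode : AN → N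
  tgtNode : NA → N
  tgtEdge : NA → A
  inj_srcEdge : Function.Injective srcEdge
  inj_tgtEdge : Function.Injective tgtEdge

/-- `x ⋖ y`: there is an inner edge from node `x` to node `y`. -/
def AinoaGraph.prec (G : AinoaGraph) (x y : G.N) : Prop :=
  ∃ (o : G.NA) (i : G.AN), G.tgtNode o = x ∧ G.srcNode i = y ∧ G.tgtEdge o = G.srcEdge i

/-- Acyclicity: no directed cycles. -/
def AinoaGraph.Acyclic (G : AinoaGraph) : Prop := ∀ x : G.N, ¬ Relation.TransGen G.prec x x

/-- In-boundary: edges not outgoing of any node. -/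
def AinoaGraph.inBoundary (G : AinoaGraph) : Set G.A := {a | a ∉ Set.range G.tgtEdge}

/-- Out-boundary: edges not incoming to any node. -/
def AinoaGraph.outBoundary (G : AinoaGraph) : Set G.A := {a | a ∉ Set.range G.srcEdge}

/-- An etale map from a graph `G` to a Petri net `P`: componentwise maps with the
two middle squares pullbacks. -/
structure EtaleMap (G : AinoaGraph) (P : PetriNet) where
  mapA : G.A → P.S
  mapI : G.AN → P.I
  mapN : G.N → P.T
  mapO : G.NA → P.O
  comm_sI : ∀ m, P.sI (mapI m) = mapA (G.srcEdge m)
  comm_tI : ∀ m, P.tI (mapI m) = mapN (G.srcNode m)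
  comm_tO : ∀ o, P.tO (mapO o) = mapN (G.tgtNode o)
  comm_sO : ∀ o, P.sO (mapO o) = mapA (G.tgtEdge o)
  etale_in : ∀ (x : G.N) (i : P.I), P.tI i = mapN x →
      ∃! m : G.AN, G.srcNode m = x ∧ mapI m = i
  etale_out : ∀ (x : G.N) (o : P.O), P.tO o = mapN x →
      ∃! m : G.NA, G.tgtNode m = x ∧ mapO m = o

/-- An etale map of graphs: componentwise maps with the two middle squares pullbacks. -/
structure GraphMap (G H : AinoaGraph) where
  mapA : G.A → H.A
  mapAN : G.AN → H.AN
  mapN : G.N → H.N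
  mapNA : G.NA → H.NA
  comm_srcEdge : ∀ m, H.srcEdge (mapAN m) = mapA (G.srcEdge m)
  comm_srcNode : ∀ m, H.srcNode (mapAN m) = mapN (G.srcNode m)
  comm_tgtNode : ∀ o, H.tgtNode (mapNA o) = mapN (G.tgtNode o)
  comm_tgtEdge : ∀ o, H.tgtEdge (mapNA o) = mapA (G.tgtEdge o)
  etale_in : ∀ (x : G.N) (m' : H.AN), H.srcNode m' = mapN x →
      ∃! m : G.AN, G.srcNode m = x ∧ mapAN m = m'
  etale_out : ∀ (x : G.N) (o' : H.NA), H.tgtNode o' = mapN x →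
      ∃! o : G.NA, G.tgtNode o = x ∧ mapNA o = o'

/-- `f : G → H` is a map over `P` with respect to etale maps `p : G → P`, `q : H → P`. -/
def GraphMap.OverP {G H : AinoaGraph} {P : PetriNet} (f : GraphMap G H)
    (p : EtaleMap G P) (q : EtaleMap H P) : Prop :=
  (∀ a, q.mapA (f.mapA a) = p.mapA a) ∧
  (∀ m, q.mapI (f.mapAN m) = p.mapI m) ∧
  (∀ x, q.mapN (f.mapN x) = p.mapN x) ∧
  (∀ o, q.mapO (f.mapNA o) = p.mapO o)

/-- The gluing relation on edges of `G₁ ⊔ G₂` identifying `m₁ x` with `m₂ x`. -/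
def glueRel (G₁ G₂ : AinoaGraph) {M : Type} (m₁ : M → G₁.A) (m₂ : M → G₂.A) :
    (G₁.A ⊕ G₂.A) → (G₁.A ⊕ G₂.A) → Prop :=
  fun x y => ∃ m : M, x = Sum.inl (m₁ m) ∧ y = Sum.inr (m₂ m)

/-!
In a pushout of sets along injections, two points of the same summand are identified only when
equal, and a point of `G₁.A` meets a point of `G₂.A` only when both come from the same point
of `M`. Edges entering nodes of `G₁` avoid the out-boundary, hence are glued to nothing, and
dually for edges leaving nodes of `G₂`; so both outer maps of the pushout stay injective. When
`M` is the whole out-boundary of `G₁` and the whole in-boundary of `G₂`, every in-boundary edge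
of `G₂` is glued to an edge of `G₁`, so the in-boundary of the pushout comes from `G₁` alone,
and dually for the out-boundary.
-/

open CategoryTheory Function Set

/-- The elementwise description of a pushout `α ⊔_M β` of injections in the category of sets. -/
structure IsGluing {M α β P : Type*} (m₁ : M → α) (m₂ : M → β) (j₁ : α → P) (j₂ : β → P) :
    Prop where
  injective_left : Injective j₁
  injective_right : Injective j₂
  left_eq_right_iff : ∀ a b, j₁ a = j₂ b ↔ ∃ m, m₁ m = a ∧ m₂ m = b
  jointly_surjective : ∀ p, (∃ a, j₁ a = p) ∨ ∃ b, j₂ b = p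

namespace IsGluing

variable {M α β P E₁ E₂ : Type*} {m₁ : M → α} {m₂ : M → β} {j₁ : α → P} {j₂ : β → P}
  {i₁ : E₁ → α} {i₂ : E₂ → β}

theorem symm (h : IsGluing m₁ m₂ j₁ j₂) : IsGluing m₂ m₁ j₂ j₁ where
  injective_left := h.injective_right
  injective_right := h.injective_left
  left_eq_right_iff b a := by
    rw [eq_comm, h.left_eq_right_iff]
    exact exists_congr fun _ => and_comm
  jointly_surjective p := (h.jointly_surjective p).symm

theorem injective_sumElim (h : IsGluing m₁ m₂ j₁ j₂) (hi₁ : Injective i₁) (hi₂ : Injective i₂)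
    (hdisj : ∀ m, m₁ m ∈ range i₁ → m₂ m ∉ range i₂) :
    Injective (Sum.elim (j₁ ∘ i₁) (j₂ ∘ i₂)) := by
  have not_left_eq_right : ∀ e₁ e₂, j₁ (i₁ e₁) ≠ j₂ (i₂ e₂) := by
    intro e₁ e₂ he
    obtain ⟨m, hm₁, hm₂⟩ := (h.left_eq_right_iff _ _).1 he
    exact hdisj m ⟨e₁, hm₁.symm⟩ ⟨e₂, hm₂.symm⟩
  rintro (e₁ | e₂) (e₁' | e₂') he
  · exact congrArg Sum.inl (hi₁ (h.injective_left he))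
  · exact absurd he (not_left_eq_right _ _)
  · exact absurd he.symm (not_left_eq_right _ _)
  · exact congrArg Sum.inr (hi₂ (h.injective_right he))

theorem compl_range_sumElim_eq_image_left (h : IsGluing m₁ m₂ j₁ j₂)
    (hm₂ : range m₂ = (range i₂)ᶜ) :
    (range (Sum.elim (j₁ ∘ i₁) (j₂ ∘ i₂)))ᶜ = j₁ '' (range i₁)ᶜ := by
  ext p
  simp only [Sum.elim_range, mem_compl_iff, mem_union, mem_range, comp_apply, not_or,
    not_exists, mem_image]
  constructor
  · rintro ⟨hp₁, hp₂⟩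
    rcases h.jointly_surjective p with ⟨a, rfl⟩ | ⟨b, rfl⟩
    · exact ⟨a, fun e he => hp₁ e (congrArg j₁ he), rfl⟩
    · obtain ⟨m, rfl⟩ : b ∈ range m₂ := hm₂ ▸ fun ⟨e, he⟩ => hp₂ e (congrArg j₂ he)
      have hglue : j₁ (m₁ m) = j₂ (m₂ m) := (h.left_eq_right_iff _ _).2 ⟨m, rfl, rfl⟩
      exact ⟨m₁ m, fun e he => hp₁ e (he ▸ hglue), hglue⟩
  · rintro ⟨a, ha, rfl⟩
    refine ⟨fun e he => ha e (h.injective_left he), fun e he => ?_⟩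
    obtain ⟨m, -, hm⟩ := (h.left_eq_right_iff _ _).1 he.symm
    exact (hm₂ ▸ mem_range_self m : m₂ m ∈ (range i₂)ᶜ) ⟨e, hm.symm⟩

theorem compl_range_sumElim_eq_image_right (h : IsGluing m₁ m₂ j₁ j₂)
    (hm₁ : range m₁ = (range i₁)ᶜ) :
    (range (Sum.elim (j₁ ∘ i₁) (j₂ ∘ i₂)))ᶜ = j₂ '' (range i₂)ᶜ := by
  rw [Sum.elim_range, union_comm, ← Sum.elim_range]
  exact h.symm.compl_range_sumElim_eq_image_left hm₁

end IsGluing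

theorem glueRel_eq_pushoutRel (G₁ G₂ : AinoaGraph) {M : Type} (m₁ : M → G₁.A) (m₂ : M → G₂.A) :
    glueRel G₁ G₂ m₁ m₂ = Limits.Types.Pushout.Rel (TypeCat.ofHom m₁) (TypeCat.ofHom m₂) := by
  ext x y
  constructor
  · rintro ⟨m, rfl, rfl⟩
    exact .inl_inr m
  · rintro ⟨m⟩
    exact ⟨m, rfl, rfl⟩

theorem isGluing_glueRel (G₁ G₂ : AinoaGraph) {M : Type} (m₁ : M → G₁.A) (m₂ : M → G₂.A)
    (hinj₁ : Injective m₁) (hinj₂ : Injective m₂) :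
    IsGluing m₁ m₂ (fun a => Quot.mk (glueRel G₁ G₂ m₁ m₂) (Sum.inl a))
      (fun b => Quot.mk (glueRel G₁ G₂ m₁ m₂) (Sum.inr b)) := by
  have : Mono (TypeCat.ofHom m₁) := (mono_iff_injective _).2 hinj₁
  have quot_mk_eq_iff (x y : G₁.A ⊕ G₂.A) : Quot.mk (glueRel G₁ G₂ m₁ m₂) x = Quot.mk _ y ↔
      Limits.Types.Pushout.Rel' (TypeCat.ofHom m₁) (TypeCat.ofHom m₂) x y := by
    rw [← Limits.Types.Pushout.quot_mk_eq_iff, Quot.eq, Quot.eq, glueRel_eq_pushoutRel]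
  refine ⟨fun a a' ha => ?_, fun b b' hb => ?_, fun a b => ?_, ?_⟩
  · rw [quot_mk_eq_iff, Limits.Types.Pushout.inl_rel'_inl_iff] at ha
    rcases ha with ha | ⟨x, y, hxy, rfl, rfl⟩
    · exact ha
    · exact congrArg m₁ (hinj₂ hxy)
  · rwa [quot_mk_eq_iff, Limits.Types.Pushout.inr_rel'_inr_iff] at hb
  · rw [quot_mk_eq_iff, Limits.Types.Pushout.inl_rel'_inr_iff]
    exact exists_congr fun _ => and_congr eq_comm eq_comm
  · rintro ⟨a | b⟩
    exacts [.inl ⟨a, rfl⟩, .inr ⟨b, rfl⟩]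

theorem pushout_of_graphs_is_graph_general (G₁ G₂ : AinoaGraph)
    {M : Type} (m₁ : M → G₁.A) (m₂ : M → G₂.A)
    (hinj₁ : Function.Injective m₁) (hinj₂ : Function.Injective m₂)
    (hout : ∀ x : M, m₁ x ∈ G₁.outBoundary) (hin : ∀ x : M, m₂ x ∈ G₂.inBoundary) :
    Function.Injective
      (Sum.elim
        (fun e : G₁.AN => Quot.mk (glueRel G₁ G₂ m₁ m₂) (Sum.inl (G₁.srcEdge e)))
        (fun e : G₂.AN => Quot.mk (glueRel G₁ G₂ m₁ m₂) (Sum.inr (G₂.srcEdge e)))) ∧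
    Function.Injective
      (Sum.elim
        (fun e : G₁.NA => Quot.mk (glueRel G₁ G₂ m₁ m₂) (Sum.inl (G₁.tgtEdge e)))
        (fun e : G₂.NA => Quot.mk (glueRel G₁ G₂ m₁ m₂) (Sum.inr (G₂.tgtEdge e)))) ∧
    (Set.range m₁ = G₁.outBoundary → Set.range m₂ = G₂.inBoundary →
      ({q | q ∉ Set.range (Sum.elim
          (fun e : G₁.NA => Quot.mk (glueRel G₁ G₂ m₁ m₂) (Sum.inl (G₁.tgtEdge e)))
          (fun e : G₂.NA => Quot.mk (glueRel G₁ G₂ m₁ m₂) (Sum.inr (G₂.tgtEdge e))))}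
        = (fun a : G₁.A => Quot.mk (glueRel G₁ G₂ m₁ m₂) (Sum.inl a)) '' G₁.inBoundary) ∧
      ({q | q ∉ Set.range (Sum.elim
          (fun e : G₁.AN => Quot.mk (glueRel G₁ G₂ m₁ m₂) (Sum.inl (G₁.srcEdge e)))
          (fun e : G₂.AN => Quot.mk (glueRel G₁ G₂ m₁ m₂) (Sum.inr (G₂.srcEdge e))))}
        = (fun a : G₂.A => Quot.mk (glueRel G₁ G₂ m₁ m₂) (Sum.inr a)) '' G₂.outBoundary)) := by
  have hG := isGluing_glueRel G₁ G₂ m₁ m₂ hinj₁ hinj₂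
  exact ⟨hG.injective_sumElim G₁.inj_srcEdge G₂.inj_srcEdge fun m h => absurd h (hout m),
    hG.injective_sumElim G₁.inj_tgtEdge G₂.inj_tgtEdge fun m _ => hin m,
    fun hr₁ hr₂ => ⟨hG.compl_range_sumElim_eq_image_left hr₂,
      hG.compl_range_sumElim_eq_image_right hr₁⟩⟩

/-- Gluing two acyclic graphs along a nodeless graph `M` embedded in the
out-boundary of `G₁` and the in-boundary of `G₂`: the componentwise pushout
`G₁ ⊔_M G₂` is again a graph (its outer maps are injective); and if `M` is the
full out-boundary of `G₁` and full in-boundary of `G₂`, then the in-boundary of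
the pushout is (the image of) the in-boundary of `G₁` and its out-boundary is
(the image of) the out-boundary of `G₂`. -/
theorem pushout_of_graphs_is_graph (G₁ G₂ : AinoaGraph)
    (hac₁ : G₁.Acyclic) (hac₂ : G₂.Acyclic)
    {M : Type} [Finite M] (m₁ : M → G₁.A) (m₂ : M → G₂.A)
    (hinj₁ : Function.Injective m₁) (hinj₂ : Function.Injective m₂)
    (hout : ∀ x : M, m₁ x ∈ G₁.outBoundary) (hin : ∀ x : M, m₂ x ∈ G₂.inBoundary) :
    Function.Injective
      (Sum.elim
        (fun e : G₁.AN => Quot.mk (glueRel G₁ G₂ m₁ m₂) (Sum.inl (G₁.srcEdge e)))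
        (fun e : G₂.AN => Quot.mk (glueRel G₁ G₂ m₁ m₂) (Sum.inr (G₂.srcEdge e)))) ∧
    Function.Injective
      (Sum.elim
        (fun e : G₁.NA => Quot.mk (glueRel G₁ G₂ m₁ m₂) (Sum.inl (G₁.tgtEdge e)))
        (fun e : G₂.NA => Quot.mk (glueRel G₁ G₂ m₁ m₂) (Sum.inr (G₂.tgtEdge e)))) ∧
    (Set.range m₁ = G₁.outBoundary → Set.range m₂ = G₂.inBoundary →
      ({q | q ∉ Set.range (Sum.elim
          (fun e : G₁.NA => Quot.mk (glueRel G₁ G₂ m₁ m₂) (Sum.inl (G₁.tgtEdge e)))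
          (fun e : G₂.NA => Quot.mk (glueRel G₁ G₂ m₁ m₂) (Sum.inr (G₂.tgtEdge e))))}
        = (fun a : G₁.A => Quot.mk (glueRel G₁ G₂ m₁ m₂) (Sum.inl a)) '' G₁.inBoundary) ∧
      ({q | q ∉ Set.range (Sum.elim
          (fun e : G₁.AN => Quot.mk (glueRel G₁ G₂ m₁ m₂) (Sum.inl (G₁.srcEdge e)))
          (fun e : G₂.AN => Quot.mk (glueRel G₁ G₂ m₁ m₂) (Sum.inr (G₂.srcEdge e))))}
        = (fun a : G₂.A => Quot.mk (glueRel G₁ G₂ m₁ m₂) (Sum.inr a)) '' G₂.outBoundary)) :=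
  pushout_of_graphs_is_graph_general G₁ G₂ m₁ m₂ hinj₁ hinj₂ hout hin
end

section
/- Let G be a finite acyclic graph with node set N and let f : N → Fin 2 be a strict level function. Define G₁ to be the sub-graph spanned by the nodes in f⁻¹(0) together with all their incident edges and the in-boundary of G, and G₂ the sub-graph spanned by f⁻¹(1), their incident edges, and the out-boundary of G. Then the out-boundary of G₁ equals the in-boundary of G₂ (as subsets of the edge set of G), and the square with this common nodeless graph M mapping to G₁ and G₂, and G₁, G₂ mapping to G, is both a pullback and a pushout (computed componentwise in finite sets). -/
/-- The edge set of the first layer `G₁` determined by a 2-level function: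
the in-boundary of `G` together with all edges incident to level-0 nodes. -/
def layerA₁ (G : AinoaGraph) (f : G.N → Fin 2) : Set G.A :=
  G.inBoundary ∪ G.srcEdge '' {m | f (G.srcNode m) = 0} ∪
    G.tgtEdge '' {o | f (G.tgtNode o) = 0}

/-- The edge set of the second layer `G₂`: the out-boundary of `G` together with
all edges incident to level-1 nodes. -/
def layerA₂ (G : AinoaGraph) (f : G.N → Fin 2) : Set G.A :=
  G.outBoundary ∪ G.srcEdge '' {m | f (G.srcNode m) = 1} ∪
    G.tgtEdge '' {o | f (G.tgtNode o) = 1}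

def AinoaGraph.IsStrictLevel {α : Type*} [LT α] (G : AinoaGraph) (f : G.N → α) : Prop :=
  ∀ (o : G.NA) (i : G.AN), G.tgtEdge o = G.srcEdge i → f (G.tgtNode o) < f (G.srcNode i)

section LevelPartition

variable {X : Type*} (g : X → Fin 2)

theorem setOf_eq_zero_inter_setOf_eq_one : {x | g x = 0} ∩ {x | g x = 1} = ∅ := by
  ext x
  simp only [Set.mem_inter_iff, Set.mem_ofPred_eq, Set.mem_empty_iff_false, iff_false]
  omega

theorem setOf_eq_zero_union_setOf_eq_one : {x | g x = 0} ∪ {x | g x = 1} = Set.univ := by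
  ext x
  simp only [Set.mem_union, Set.mem_ofPred_eq, Set.mem_univ, iff_true]
  omega

end LevelPartition

section Layers

variable {G : AinoaGraph} {f : G.N → Fin 2}

theorem mem_layerA₁_iff (hf : G.IsStrictLevel f) {a : G.A} :
    a ∈ layerA₁ G f ↔ ∀ o, G.tgtEdge o = a → f (G.tgtNode o) = 0 := by
  constructor
  · rintro ((hin | ⟨i, hi, rfl⟩) | ⟨o', ho', rfl⟩) o ho
    · exact absurd ⟨o, ho⟩ hin
    · have := hf o i ho
      omega
    · rwa [G.inj_tgtEdge ho]
  · intro h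
    by_cases hprod : a ∈ Set.range G.tgtEdge
    · obtain ⟨o, rfl⟩ := hprod
      exact Or.inr ⟨o, h o rfl, rfl⟩
    · exact Or.inl (Or.inl hprod)

theorem mem_layerA₂_iff (hf : G.IsStrictLevel f) {a : G.A} :
    a ∈ layerA₂ G f ↔ ∀ i, G.srcEdge i = a → f (G.srcNode i) = 1 := by
  constructor
  · rintro ((hout | ⟨i', hi', rfl⟩) | ⟨o, ho, rfl⟩) i hi
    · exact absurd ⟨i, hi⟩ hout
    · rwa [G.inj_srcEdge hi]
    · have := hf o i hi.symm
      omega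
  · intro h
    by_cases hcons : a ∈ Set.range G.srcEdge
    · obtain ⟨i, rfl⟩ := hcons
      exact Or.inl (Or.inr ⟨i, h i rfl, rfl⟩)
    · exact Or.inl (Or.inl hcons)

theorem compl_layerA₁ (hf : G.IsStrictLevel f) :
    (layerA₁ G f)ᶜ = G.tgtEdge '' {o | f (G.tgtNode o) = 1} := by
  ext a
  simp only [Set.mem_compl_iff, mem_layerA₁_iff hf, Set.mem_image, Set.mem_ofPred_eq]
  push Not
  exact exists_congr fun o => and_comm.trans (and_congr_left' (by omega))

theorem compl_layerA₂ (hf : G.IsStrictLevel f) :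
    (layerA₂ G f)ᶜ = G.srcEdge '' {i | f (G.srcNode i) = 0} := by
  ext a
  simp only [Set.mem_compl_iff, mem_layerA₂_iff hf, Set.mem_image, Set.mem_ofPred_eq]
  push Not
  exact exists_congr fun i => and_comm.trans (and_congr_left' (by omega))

theorem layerA₁_union_layerA₂ (hf : G.IsStrictLevel f) :
    layerA₁ G f ∪ layerA₂ G f = Set.univ := by
  refine Set.eq_univ_of_forall fun a => ?_
  rw [Set.mem_union, mem_layerA₁_iff hf, mem_layerA₂_iff hf]
  by_contra! ⟨⟨o, rfl, ho⟩, ⟨i, hi, hi'⟩⟩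
  have := hf o i hi.symm
  omega

end Layers

theorem cut_along_level_function_general (G : AinoaGraph)
    (f : G.N → Fin 2)
    (hstrict : ∀ (o : G.NA) (i : G.AN),
      G.tgtEdge o = G.srcEdge i → f (G.tgtNode o) < f (G.srcNode i)) :
    (layerA₁ G f \ G.srcEdge '' {m | f (G.srcNode m) = 0}
      = layerA₂ G f \ G.tgtEdge '' {o | f (G.tgtNode o) = 1}) ∧
    (layerA₁ G f ∩ layerA₂ G f
      = layerA₁ G f \ G.srcEdge '' {m | f (G.srcNode m) = 0}) ∧
    (layerA₁ G f ∪ layerA₂ G f = Set.univ) ∧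
    ({x : G.N | f x = 0} ∩ {x | f x = 1} = ∅) ∧
    ({x : G.N | f x = 0} ∪ {x | f x = 1} = Set.univ) ∧
    ({m : G.AN | f (G.srcNode m) = 0} ∩ {m | f (G.srcNode m) = 1} = ∅) ∧
    ({m : G.AN | f (G.srcNode m) = 0} ∪ {m | f (G.srcNode m) = 1} = Set.univ) ∧
    ({o : G.NA | f (G.tgtNode o) = 0} ∩ {o | f (G.tgtNode o) = 1} = ∅) ∧
    ({o : G.NA | f (G.tgtNode o) = 0} ∪ {o | f (G.tgtNode o) = 1} = Set.univ) := by
  rw [← compl_layerA₁ hstrict, ← compl_layerA₂ hstrict, Set.sdiff_compl, Set.sdiff_compl,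
    Set.inter_comm (layerA₂ G f)]
  exact ⟨rfl, rfl, layerA₁_union_layerA₂ hstrict,
    setOf_eq_zero_inter_setOf_eq_one f, setOf_eq_zero_union_setOf_eq_one f,
    setOf_eq_zero_inter_setOf_eq_one _, setOf_eq_zero_union_setOf_eq_one _,
    setOf_eq_zero_inter_setOf_eq_one _, setOf_eq_zero_union_setOf_eq_one _⟩

/-- Cutting an acyclic graph along a strict 2-level function: the out-boundary
of the first layer equals the in-boundary of the second layer (the cut `M`),
and the resulting square of subgraphs is componentwise both a pullback
(intersections) and a pushout (unions): `A₁ ∩ A₂ = M`, `A₁ ∪ A₂ = A`, and the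
node- and incidence-components split disjointly. -/
theorem cut_along_level_function (G : AinoaGraph) (hac : G.Acyclic)
    (f : G.N → Fin 2)
    (hstrict : ∀ (o : G.NA) (i : G.AN),
      G.tgtEdge o = G.srcEdge i → f (G.tgtNode o) < f (G.srcNode i)) :
    (layerA₁ G f \ G.srcEdge '' {m | f (G.srcNode m) = 0}
      = layerA₂ G f \ G.tgtEdge '' {o | f (G.tgtNode o) = 1}) ∧
    (layerA₁ G f ∩ layerA₂ G f
      = layerA₁ G f \ G.srcEdge '' {m | f (G.srcNode m) = 0}) ∧
    (layerA₁ G f ∪ layerA₂ G f = Set.univ) ∧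
    ({x : G.N | f x = 0} ∩ {x | f x = 1} = ∅) ∧
    ({x : G.N | f x = 0} ∪ {x | f x = 1} = Set.univ) ∧
    ({m : G.AN | f (G.srcNode m) = 0} ∩ {m | f (G.srcNode m) = 1} = ∅) ∧
    ({m : G.AN | f (G.srcNode m) = 0} ∪ {m | f (G.srcNode m) = 1} = Set.univ) ∧
    ({o : G.NA | f (G.tgtNode o) = 0} ∩ {o | f (G.tgtNode o) = 1} = ∅) ∧
    ({o : G.NA | f (G.tgtNode o) = 0} ∪ {o | f (G.tgtNode o) = 1} = Set.univ) :=
  cut_along_level_function_general G f hstrict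
end

section
/- Let b : P' → P be a cabling map of Petri nets (bijective on transitions and with the two outer squares pullbacks along a map β : S' → S of places) and let p : G → P be a process (an etale map from a finite acyclic graph). Then the componentwise pullback of p along b yields an etale map p' : G' → P' from a graph G': the pulled-back diagram has injective outer maps, and the middle squares of p' are pullbacks. -/
/-- A cabling map of Petri nets `P' → P`: bijective on transitions, with the two
outer squares (at the places) pullbacks along `cS : S' → S`. -/
structure CablingMap (P' P : PetriNet) where
  cS : P'.S → P.S
  cI : P'.I → P.I
  cT : P'.T → P.T
  cO : P'.O → P.O
  bij_T : Function.Bijective cT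
  comm_sI : ∀ i', P.sI (cI i') = cS (P'.sI i')
  comm_tI : ∀ i', P.tI (cI i') = cT (P'.tI i')
  comm_tO : ∀ o', P.tO (cO o') = cT (P'.tO o')
  comm_sO : ∀ o', P.sO (cO o') = cS (P'.sO o')
  pb_in : ∀ (s' : P'.S) (i : P.I), P.sI i = cS s' →
      ∃! i' : P'.I, P'.sI i' = s' ∧ cI i' = i
  pb_out : ∀ (s' : P'.S) (o : P.O), P.sO o = cS s' →
      ∃! o' : P'.O, P'.sO o' = s' ∧ cO o' = o

/-!
The outer maps of `G'` are injective because those of `G` are and because the outer squares of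
a cabling map are pullbacks, so that `I' → S' × I` is injective. The middle squares of
`G' → P'` are pullbacks because, `G'` being a fibre product over `P`, an arc of `G'` at a node
`(x, t')` with a given input `i'` is the same thing as an arc of `G` at `x` lying over `c.cI i'`,
and there is exactly one such since `p` is etale.
-/

open Function

theorem injective_prodMk_of_existsUnique {X Y Z W : Type*} {f : X → Y} {g : X → Z}
    {k : Y → W} {h : Z → W} (hcomm : ∀ x, h (g x) = k (f x))
    (hpb : ∀ y z, h z = k y → ∃! x, f x = y ∧ g x = z) :
    Injective fun x => (f x, g x) := by
  intro x₁ x₂ hx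
  obtain ⟨hf, hg⟩ := Prod.mk.inj hx
  exact (hpb _ _ (hcomm x₁)).unique ⟨rfl, rfl⟩ ⟨hf.symm, hg.symm⟩

theorem injective_fiberProduct_map {X Y A B C : Type*} {f : X → A} {u : X → C} {g : Y → B}
    {v : Y → C} (hf : Injective f) (hgv : Injective fun y => (g y, v y)) :
    Injective fun z : {w : X × Y // u w.1 = v w.2} => (f z.1.1, g z.1.2) := by
  rintro ⟨⟨x₁, y₁⟩, h₁⟩ ⟨⟨x₂, y₂⟩, h₂⟩ h
  obtain ⟨hx, hy⟩ := Prod.mk.inj h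
  obtain rfl := hf hx
  obtain rfl := hgv (Prod.ext hy (h₁.symm.trans h₂))
  rfl

theorem existsUnique_fiberProduct {M N I I' : Type*} {src : M → N} {pI : M → I} {cI : I' → I}
    {x : N} {i' : I'} (h : ∃! m, src m = x ∧ pI m = cI i') :
    ∃! z : {w : M × I' // pI w.1 = cI w.2}, src z.1.1 = x ∧ z.1.2 = i' := by
  obtain ⟨m, ⟨hm, hpm⟩, huniq⟩ := h
  refine ⟨⟨(m, i'), hpm⟩, ⟨hm, rfl⟩, ?_⟩
  rintro ⟨⟨m₂, _⟩, h₂⟩ ⟨hs, rfl⟩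
  obtain rfl := huniq m₂ ⟨hs, h₂⟩
  rfl

theorem pullback_process_along_cabling_general (P P' : PetriNet) (c : CablingMap P' P)
    (G : AinoaGraph) (p : EtaleMap G P) :
    Function.Injective
      (fun m : {x : G.AN × P'.I // p.mapI x.1 = c.cI x.2} =>
        (G.srcEdge m.1.1, P'.sI m.1.2)) ∧
    Function.Injective
      (fun o : {x : G.NA × P'.O // p.mapO x.1 = c.cO x.2} =>
        (G.tgtEdge o.1.1, P'.sO o.1.2)) ∧
    (∀ (n : {x : G.N × P'.T // p.mapN x.1 = c.cT x.2}) (i' : P'.I),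
      P'.tI i' = n.1.2 →
      ∃! m : {x : G.AN × P'.I // p.mapI x.1 = c.cI x.2},
        G.srcNode m.1.1 = n.1.1 ∧ m.1.2 = i') ∧
    (∀ (n : {x : G.N × P'.T // p.mapN x.1 = c.cT x.2}) (o' : P'.O),
      P'.tO o' = n.1.2 →
      ∃! m : {x : G.NA × P'.O // p.mapO x.1 = c.cO x.2},
        G.tgtNode m.1.1 = n.1.1 ∧ m.1.2 = o') := by
  refine ⟨injective_fiberProduct_map G.inj_srcEdge
      (injective_prodMk_of_existsUnique c.comm_sI c.pb_in),
    injective_fiberProduct_map G.inj_tgtEdge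
      (injective_prodMk_of_existsUnique c.comm_sO c.pb_out), ?_, ?_⟩
  · rintro ⟨⟨x, t'⟩, hx⟩ i' hi'
    exact existsUnique_fiberProduct (p.etale_in x _ (by rw [c.comm_tI, hi', ← hx]))
  · rintro ⟨⟨x, t'⟩, hx⟩ o' ho'
    exact existsUnique_fiberProduct (p.etale_out x _ (by rw [c.comm_tO, ho', ← hx]))

/-- Pulling back a process along a cabling map: for a cabling map `b : P' → P`
and a process `p : G → P`, the componentwise pullback `G'` (with components the
fibre products of the components of `G` with those of `P'` over `P`) is again a
graph mapping etale to `P'`: its outer maps are injective, and the middle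
squares of the induced map to `P'` are pullbacks. -/
theorem pullback_process_along_cabling (P P' : PetriNet) (c : CablingMap P' P)
    (G : AinoaGraph) (hG : G.Acyclic) (p : EtaleMap G P) :
    Function.Injective
      (fun m : {x : G.AN × P'.I // p.mapI x.1 = c.cI x.2} =>
        (G.srcEdge m.1.1, P'.sI m.1.2)) ∧
    Function.Injective
      (fun o : {x : G.NA × P'.O // p.mapO x.1 = c.cO x.2} =>
        (G.tgtEdge o.1.1, P'.sO o.1.2)) ∧
    (∀ (n : {x : G.N × P'.T // p.mapN x.1 = c.cT x.2}) (i' : P'.I),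
      P'.tI i' = n.1.2 →
      ∃! m : {x : G.AN × P'.I // p.mapI x.1 = c.cI x.2},
        G.srcNode m.1.1 = n.1.1 ∧ m.1.2 = i') ∧
    (∀ (n : {x : G.N × P'.T // p.mapN x.1 = c.cT x.2}) (o' : P'.O),
      P'.tO o' = n.1.2 →
      ∃! m : {x : G.NA × P'.O // p.mapO x.1 = c.cO x.2},
        G.tgtNode m.1.1 = n.1.1 ∧ m.1.2 = o') :=
  pullback_process_along_cabling_general P P' c G p
end
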